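/- Let M = (S, A, P, R, γ) be a finite discounted MDP with rewards in [0,1], g : A → G a grouping function, and suppose M admits a linear decomposition with deviation factors (β_P, β_R) and components (b_P, b_R, P₁, P₂, R₁, R₂). Define the MDP M₁ = (S, A, P₁', R₁', γ) with P₁'(s'|s,a) = P₁(s'|s,g(a)) and R₁'(s,a) = R₁(s,g(a)). Then for every policy π, ‖Q_M^π − Q_{M₁}^π‖_∞ ≤ β_R/(1−γ) + γ·β_P/(1−γ)². -/

import Mathlib

open scoped BigOperators Classical

namespace MDPGroup

variable {S A G : Type*}

/-- `P` is a transition kernel: `P s a ·` is a probability distribution on states. -/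
structure IsKernel [Fintype S] (P : S → A → S → ℝ) : Prop where
  nonneg : ∀ s a s', 0 ≤ P s a s'
  sum_one : ∀ s a, ∑ s', P s a s' = 1

/-- `π` is a stationary randomized policy. -/
structure IsPolicy [Fintype A] (π : S → A → ℝ) : Prop where
  nonneg : ∀ s a, 0 ≤ π s a
  sum_one : ∀ s, ∑ a, π s a = 1

/-- `Q` satisfies the Bellman equation for policy `π`. -/
def IsBellman [Fintype S] [Fintype A] (P : S → A → S → ℝ) (R : S → A → ℝ) (γ : ℝ)
    (π : S → A → ℝ) (Q : S → A → ℝ) : Prop :=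
  ∀ s a, Q s a = R s a + γ * ∑ s', P s a s' * ∑ a', π s' a' * Q s' a'

/-- The action-value function of policy `π` (the unique solution of the Bellman equation,
when it exists). -/
noncomputable def Qpi [Fintype S] [Fintype A] (P : S → A → S → ℝ) (R : S → A → ℝ)
    (γ : ℝ) (π : S → A → ℝ) : S → A → ℝ :=
  if h : ∃ Q : S → A → ℝ, IsBellman P R γ π Q then h.choose else 0

/-- The state-value function of policy `π`. -/
noncomputable def Vpi [Fintype S] [Fintype A] (P : S → A → S → ℝ) (R : S → A → ℝ)
    (γ : ℝ) (π : S → A → ℝ) : S → ℝ :=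
  fun s => ∑ a, π s a * Qpi P R γ π s a

/-- The optimal state-value function. -/
noncomputable def Vstar [Fintype S] [Fintype A] (P : S → A → S → ℝ) (R : S → A → ℝ)
    (γ : ℝ) : S → ℝ :=
  fun s => ⨆ π : {π : S → A → ℝ // IsPolicy π}, Vpi P R γ π.1 s

/-- The optimal action-value function. -/
noncomputable def Qstar [Fintype S] [Fintype A] (P : S → A → S → ℝ) (R : S → A → ℝ)
    (γ : ℝ) : S → A → ℝ :=
  fun s a => ⨆ π : {π : S → A → ℝ // IsPolicy π}, Qpi P R γ π.1 s a

/-- Supremum norm of a function on a (finite) index type. -/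
noncomputable def supNorm {ι : Type*} (f : ι → ℝ) : ℝ := ⨆ i, |f i|

/-- A lower-level policy, selecting an action within each group. -/
structure IsLower [Fintype A] (g : A → G) (πi : G → A → ℝ) : Prop where
  nonneg : ∀ h a, 0 ≤ πi h a
  sum_one : ∀ h, ∑ a, πi h a = 1
  support : ∀ h a, g a ≠ h → πi h a = 0

/-- The composed policy `π^o ∘ π^i`. -/
def compose (g : A → G) (πi : G → A → ℝ) (πo : S → G → ℝ) : S → A → ℝ :=
  fun s a => πo s (g a) * πi (g a) a

/-- Grouped transition kernel. -/
noncomputable def PG [Fintype A] (P : S → A → S → ℝ) (πi : G → A → ℝ) : S → G → S → ℝ :=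
  fun s h s' => ∑ a, πi h a * P s a s'

/-- Grouped reward. -/
noncomputable def RG [Fintype A] (R : S → A → ℝ) (πi : G → A → ℝ) : S → G → ℝ :=
  fun s h => ∑ a, πi h a * R s a

/-- The optimal transition deviation factor `β_P^*(g)`. -/
noncomputable def betaPstar [Fintype S] (P : S → A → S → ℝ) (g : A → G) : ℝ :=
  ⨆ p : S × G, (1 - ∑ s', ⨅ a : {a : A // g a = p.2}, P p.1 a.1 s')

/-- The optimal reward deviation factor `β_R^*(g)`. -/
noncomputable def betaRstar (R : S → A → ℝ) (g : A → G) : ℝ :=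
  ⨆ q : {q : S × A × A // g q.2.1 = g q.2.2}, (R q.1.1 q.1.2.1 - R q.1.1 q.1.2.2)


/-- A linear decomposition of `(P, R)` along the grouping `g`
with deviation factors `(βP, βR)`. -/
structure IsDecomp [Fintype S] (P : S → A → S → ℝ) (R : S → A → ℝ)
    (g : A → G) (βP βR : ℝ) (bP bR : S → A → ℝ) (P1 : S → G → S → ℝ)
    (P2 : S → A → S → ℝ) (R1 : S → G → ℝ) (R2 : S → A → ℝ) : Prop where
  bP_nonneg : ∀ s a, 0 ≤ bP s a
  bP_le_one : ∀ s a, bP s a ≤ 1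
  bR_nonneg : ∀ s a, 0 ≤ bR s a
  bR_le_one : ∀ s a, bR s a ≤ 1
  bP_le : ∀ s a, bP s a ≤ βP
  bR_le : ∀ s a, bR s a ≤ βR
  P1_nonneg : ∀ s h s', 0 ≤ P1 s h s'
  P1_sum : ∀ s h, ∑ s', P1 s h s' = 1
  P2_nonneg : ∀ s a s', 0 ≤ P2 s a s'
  P2_sum : ∀ s a, ∑ s', P2 s a s' = 1
  R1_nonneg : ∀ s h, 0 ≤ R1 s h
  R1_le_one : ∀ s h, R1 s h ≤ 1
  R2_nonneg : ∀ s a, 0 ≤ R2 s a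
  R2_le_one : ∀ s a, R2 s a ≤ 1
  P_eq : ∀ s a s', P s a s' = (1 - bP s a) * P1 s (g a) s' + bP s a * P2 s a s'
  R_eq : ∀ s a, R s a = (1 - bR s a) * R1 s (g a) + bR s a * R2 s a


lemma avg_le {ι : Type*} [Fintype ι] (w f : ι → ℝ) (hw : ∀ i, 0 ≤ w i)
    (hs : ∑ i, w i = 1) (c : ℝ) (hf : ∀ i, f i ≤ c) : ∑ i, w i * f i ≤ c := by
  calc ∑ i, w i * f i ≤ ∑ i, w i * c :=
        Finset.sum_le_sum (fun i _ => mul_le_mul_of_nonneg_left (hf i) (hw i))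
    _ = c := by rw [← Finset.sum_mul, hs, one_mul]

lemma avg_ge {ι : Type*} [Fintype ι] (w f : ι → ℝ) (hw : ∀ i, 0 ≤ w i)
    (hs : ∑ i, w i = 1) (c : ℝ) (hf : ∀ i, c ≤ f i) : c ≤ ∑ i, w i * f i := by
  calc c = ∑ i, w i * c := by rw [← Finset.sum_mul, hs, one_mul]
    _ ≤ ∑ i, w i * f i :=
        Finset.sum_le_sum (fun i _ => mul_le_mul_of_nonneg_left (hf i) (hw i))

lemma avg_abs_le {ι : Type*} [Fintype ι] (w f : ι → ℝ) (hw : ∀ i, 0 ≤ w i)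
    (hs : ∑ i, w i = 1) (c : ℝ) (hf : ∀ i, |f i| ≤ c) : |∑ i, w i * f i| ≤ c := by
  calc |∑ i, w i * f i| ≤ ∑ i, |w i * f i| := Finset.abs_sum_le_sum_abs _ _
    _ = ∑ i, w i * |f i| := by
        refine Finset.sum_congr rfl fun i _ => ?_
        rw [abs_mul, abs_of_nonneg (hw i)]
    _ ≤ c := avg_le w (fun i => |f i|) hw hs c hf

lemma exists_bellman [Fintype S] [Fintype A]
    (P : S → A → S → ℝ) (R : S → A → ℝ) (γ : ℝ) (hγ0 : 0 ≤ γ) (hγ1 : γ < 1)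
    (hP : IsKernel P) (π : S → A → ℝ) (hπ : IsPolicy π) :
    ∃ Q : S → A → ℝ, IsBellman P R γ π Q := by
  set T : (S → A → ℝ) → (S → A → ℝ) :=
    fun Q s a => R s a + γ * ∑ s', P s a s' * ∑ a', π s' a' * Q s' a' with hT
  have hlip : LipschitzWith ⟨γ, hγ0⟩ T := by
    apply LipschitzWith.of_dist_le_mul
    intro f q
    show dist (T f) (T q) ≤ γ * dist f q
    rw [dist_pi_le_iff (mul_nonneg hγ0 dist_nonneg)]
    intro s
    rw [dist_pi_le_iff (mul_nonneg hγ0 dist_nonneg)]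
    intro a
    rw [Real.dist_eq]
    have hdiff : T f s a - T q s a
        = γ * ∑ s', P s a s' * ∑ a', π s' a' * (f s' a' - q s' a') := by
      simp only [hT, mul_sub, Finset.sum_sub_distrib]
      ring
    rw [hdiff, abs_mul, abs_of_nonneg hγ0]
    refine mul_le_mul_of_nonneg_left ?_ hγ0
    refine avg_abs_le _ _ (hP.nonneg s a) (hP.sum_one s a) _ (fun s' => ?_)
    refine avg_abs_le _ _ (hπ.nonneg s') (hπ.sum_one s') _ (fun a' => ?_)
    calc |f s' a' - q s' a'| = dist (f s' a') (q s' a') := (Real.dist_eq _ _).symm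
      _ ≤ dist (f s') (q s') := dist_le_pi_dist _ _ _
      _ ≤ dist f q := dist_le_pi_dist _ _ _
  have hK : (⟨γ, hγ0⟩ : NNReal) < 1 := by
    exact NNReal.coe_lt_coe.mp hγ1
  have hc : ContractingWith ⟨γ, hγ0⟩ T := ⟨hK, hlip⟩
  refine ⟨ContractingWith.fixedPoint T hc, fun s a => ?_⟩
  have hfp := hc.fixedPoint_isFixedPt
  exact (congrFun (congrFun hfp s) a).symm

lemma bellman_bounds [Fintype S] [Fintype A] [Nonempty S] [Nonempty A]
    (P : S → A → S → ℝ) (R : S → A → ℝ) (γ : ℝ) (hγ0 : 0 ≤ γ) (hγ1 : γ < 1)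
    (hP : IsKernel P) (hR : ∀ s a, 0 ≤ R s a ∧ R s a ≤ 1)
    (π : S → A → ℝ) (hπ : IsPolicy π) (Q : S → A → ℝ) (hQ : IsBellman P R γ π Q) :
    ∀ s a, 0 ≤ Q s a ∧ Q s a ≤ 1 / (1 - γ) := by
  obtain ⟨p0, hp0⟩ := Finite.exists_max (fun p : S × A => Q p.1 p.2)
  obtain ⟨p1, hp1⟩ := Finite.exists_min (fun p : S × A => Q p.1 p.2)
  have hin0 : ∑ s', P p0.1 p0.2 s' * ∑ a', π s' a' * Q s' a' ≤ Q p0.1 p0.2 := by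
    refine avg_le _ _ (hP.nonneg _ _) (hP.sum_one _ _) _ (fun s' => ?_)
    exact avg_le _ _ (hπ.nonneg s') (hπ.sum_one s') _ (fun a' => hp0 (s', a'))
  have hin1 : Q p1.1 p1.2 ≤ ∑ s', P p1.1 p1.2 s' * ∑ a', π s' a' * Q s' a' := by
    refine avg_ge _ _ (hP.nonneg _ _) (hP.sum_one _ _) _ (fun s' => ?_)
    exact avg_ge _ _ (hπ.nonneg s') (hπ.sum_one s') _ (fun a' => hp1 (s', a'))
  have hmax : Q p0.1 p0.2 ≤ 1 / (1 - γ) := by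
    have h1 : Q p0.1 p0.2 ≤ 1 + γ * Q p0.1 p0.2 := by
      have := hQ p0.1 p0.2
      nlinarith [(hR p0.1 p0.2).2, mul_le_mul_of_nonneg_left hin0 hγ0]
    rw [le_div_iff₀ (by linarith)]
    nlinarith
  have hmin : 0 ≤ Q p1.1 p1.2 := by
    have h1 : γ * Q p1.1 p1.2 ≤ Q p1.1 p1.2 := by
      have := hQ p1.1 p1.2
      nlinarith [(hR p1.1 p1.2).1, mul_le_mul_of_nonneg_left hin1 hγ0]
    nlinarith
  exact fun s a => ⟨hmin.trans (hp1 (s, a)), (hp0 (s, a)).trans hmax⟩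

lemma qpi_isBellman [Fintype S] [Fintype A] {P : S → A → S → ℝ} {R : S → A → ℝ}
    {γ : ℝ} {π : S → A → ℝ} (h : ∃ Q : S → A → ℝ, IsBellman P R γ π Q) :
    IsBellman P R γ π (Qpi P R γ π) := by
  rw [Qpi, dif_pos h]; exact h.choose_spec

theorem statement_10 {S A G : Type*} [Fintype S] [Fintype A] [Fintype G]
    [Nonempty S] [Nonempty A]
    (P : S → A → S → ℝ) (R : S → A → ℝ) (γ : ℝ)
    (hP : IsKernel P) (hR : ∀ s a, 0 ≤ R s a ∧ R s a ≤ 1)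
    (hγ0 : 0 ≤ γ) (hγ1 : γ < 1)
    (g : A → G) (hg : Function.Surjective g)
    (βP βR : ℝ) (hβP : 0 ≤ βP ∧ βP ≤ 1) (hβR : 0 ≤ βR ∧ βR ≤ 1)
    (bP bR : S → A → ℝ) (P1 : S → G → S → ℝ) (P2 : S → A → S → ℝ)
    (R1 : S → G → ℝ) (R2 : S → A → ℝ)
    (hdec : IsDecomp P R g βP βR bP bR P1 P2 R1 R2)
    (π : S → A → ℝ) (hπ : IsPolicy π) :
    supNorm (fun p : S × A =>
        Qpi P R γ π p.1 p.2
          - Qpi (fun s a s' => P1 s (g a) s') (fun s a => R1 s (g a)) γ π p.1 p.2)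
      ≤ βR / (1 - γ) + γ * βP / (1 - γ) ^ 2 := by
  have hc : (0:ℝ) < 1 - γ := by linarith
  set P1' : S → A → S → ℝ := fun s a s' => P1 s (g a) s' with hP1'
  set R1' : S → A → ℝ := fun s a => R1 s (g a) with hR1'
  have hP1k : IsKernel P1' :=
    ⟨fun s a s' => hdec.P1_nonneg s (g a) s', fun s a => hdec.P1_sum s (g a)⟩
  have hR1b : ∀ s a, 0 ≤ R1' s a ∧ R1' s a ≤ 1 :=
    fun s a => ⟨hdec.R1_nonneg s (g a), hdec.R1_le_one s (g a)⟩
  have hexQ := exists_bellman P R γ hγ0 hγ1 hP π hπ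
  have hexQ1 := exists_bellman P1' R1' γ hγ0 hγ1 hP1k π hπ
  set Q : S → A → ℝ := Qpi P R γ π with hQdef
  set Q1 : S → A → ℝ := Qpi P1' R1' γ π with hQ1def
  have hQb : IsBellman P R γ π Q := qpi_isBellman hexQ
  have hQ1b : IsBellman P1' R1' γ π Q1 := qpi_isBellman hexQ1
  have hQ1bd := bellman_bounds P1' R1' γ hγ0 hγ1 hP1k hR1b π hπ Q1 hQ1b
  -- maximizer of the absolute difference
  obtain ⟨p0, hp0⟩ := Finite.exists_max (fun p : S × A => |Q p.1 p.2 - Q1 p.1 p.2|)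
  set M : ℝ := |Q p0.1 p0.2 - Q1 p0.1 p0.2| with hM
  have hMnn : 0 ≤ M := abs_nonneg _
  -- pointwise bound
  have hpt : ∀ s a, |Q s a - Q1 s a| ≤ βR + γ * M + γ * (βP / (1 - γ)) := by
    intro s a
    have key : Q s a - Q1 s a
        = (R s a - R1 s (g a))
          + γ * (∑ s', P s a s' *
              ((∑ a', π s' a' * Q s' a') - (∑ a', π s' a' * Q1 s' a')))
          + γ * (∑ s', (P s a s' - P1 s (g a) s') * (∑ a', π s' a' * Q1 s' a')) := by
      rw [hQb s a, hQ1b s a]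
      simp only [hP1', hR1', mul_sub, sub_mul, Finset.sum_sub_distrib]
      ring
    have hRterm : |R s a - R1 s (g a)| ≤ βR := by
      have := hdec.R_eq s a
      have h2 : R s a - R1 s (g a) = bR s a * (R2 s a - R1 s (g a)) := by linarith [this]
      rw [h2, abs_mul, abs_of_nonneg (hdec.bR_nonneg s a)]
      have habs : |R2 s a - R1 s (g a)| ≤ 1 := by
        rw [abs_sub_le_iff]
        constructor
        · linarith [hdec.R2_le_one s a, hdec.R1_nonneg s (g a)]
        · linarith [hdec.R1_le_one s (g a), hdec.R2_nonneg s a]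
      calc bR s a * |R2 s a - R1 s (g a)| ≤ bR s a * 1 :=
            mul_le_mul_of_nonneg_left habs (hdec.bR_nonneg s a)
        _ = bR s a := mul_one _
        _ ≤ βR := hdec.bR_le s a
    have hVterm : |∑ s', P s a s' *
        ((∑ a', π s' a' * Q s' a') - (∑ a', π s' a' * Q1 s' a'))| ≤ M := by
      refine avg_abs_le _ _ (hP.nonneg s a) (hP.sum_one s a) _ (fun s' => ?_)
      have h3 : (∑ a', π s' a' * Q s' a') - (∑ a', π s' a' * Q1 s' a')
          = ∑ a', π s' a' * (Q s' a' - Q1 s' a') := by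
        simp only [mul_sub, Finset.sum_sub_distrib]
      rw [h3]
      exact avg_abs_le _ _ (hπ.nonneg s') (hπ.sum_one s') _ (fun a' => hp0 (s', a'))
    have hPterm : |∑ s', (P s a s' - P1 s (g a) s') * (∑ a', π s' a' * Q1 s' a')|
        ≤ βP / (1 - γ) := by
      have h4 : ∀ s', P s a s' - P1 s (g a) s'
          = bP s a * (P2 s a s' - P1 s (g a) s') := by
        intro s'; have := hdec.P_eq s a s'; linarith [this]
      have h5 : ∑ s', (P s a s' - P1 s (g a) s') * (∑ a', π s' a' * Q1 s' a')
          = bP s a * ((∑ s', P2 s a s' * ∑ a', π s' a' * Q1 s' a')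
              - (∑ s', P1 s (g a) s' * ∑ a', π s' a' * Q1 s' a')) := by
        simp only [h4]
        rw [mul_sub, Finset.mul_sum, Finset.mul_sum, ← Finset.sum_sub_distrib]
        exact Finset.sum_congr rfl fun s' _ => by ring
      rw [h5, abs_mul, abs_of_nonneg (hdec.bP_nonneg s a)]
      have hVbd : ∀ s', 0 ≤ (∑ a', π s' a' * Q1 s' a')
          ∧ (∑ a', π s' a' * Q1 s' a') ≤ 1 / (1 - γ) := by
        intro s'
        constructor
        · exact avg_ge _ _ (hπ.nonneg s') (hπ.sum_one s') _ (fun a' => (hQ1bd s' a').1)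
        · exact avg_le _ _ (hπ.nonneg s') (hπ.sum_one s') _ (fun a' => (hQ1bd s' a').2)
      have hx1 : 0 ≤ ∑ s', P2 s a s' * ∑ a', π s' a' * Q1 s' a' :=
        avg_ge _ _ (hdec.P2_nonneg s a) (hdec.P2_sum s a) _ (fun s' => (hVbd s').1)
      have hx2 : ∑ s', P2 s a s' * ∑ a', π s' a' * Q1 s' a' ≤ 1 / (1 - γ) :=
        avg_le _ _ (hdec.P2_nonneg s a) (hdec.P2_sum s a) _ (fun s' => (hVbd s').2)
      have hy1 : 0 ≤ ∑ s', P1 s (g a) s' * ∑ a', π s' a' * Q1 s' a' :=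
        avg_ge _ _ (hdec.P1_nonneg s (g a)) (hdec.P1_sum s (g a)) _ (fun s' => (hVbd s').1)
      have hy2 : ∑ s', P1 s (g a) s' * ∑ a', π s' a' * Q1 s' a' ≤ 1 / (1 - γ) :=
        avg_le _ _ (hdec.P1_nonneg s (g a)) (hdec.P1_sum s (g a)) _ (fun s' => (hVbd s').2)
      have habs : |(∑ s', P2 s a s' * ∑ a', π s' a' * Q1 s' a')
          - (∑ s', P1 s (g a) s' * ∑ a', π s' a' * Q1 s' a')| ≤ 1 / (1 - γ) := by
        rw [abs_sub_le_iff]; constructor <;> linarith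
      calc bP s a * |_| ≤ bP s a * (1 / (1 - γ)) :=
            mul_le_mul_of_nonneg_left habs (hdec.bP_nonneg s a)
        _ ≤ βP * (1 / (1 - γ)) :=
            mul_le_mul_of_nonneg_right (hdec.bP_le s a) (by positivity)
        _ = βP / (1 - γ) := by ring
    calc |Q s a - Q1 s a|
        ≤ |R s a - R1 s (g a)|
          + |γ * (∑ s', P s a s' *
              ((∑ a', π s' a' * Q s' a') - (∑ a', π s' a' * Q1 s' a')))|
          + |γ * (∑ s', (P s a s' - P1 s (g a) s') * (∑ a', π s' a' * Q1 s' a'))| := by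
          rw [key]; exact (abs_add_three _ _ _)
      _ ≤ βR + γ * M + γ * (βP / (1 - γ)) := by
          rw [abs_mul, abs_mul, abs_of_nonneg hγ0]
          have h6 := mul_le_mul_of_nonneg_left hVterm hγ0
          have h7 := mul_le_mul_of_nonneg_left hPterm hγ0
          linarith
  -- self-bound at the maximizer
  have hMle : M ≤ βR / (1 - γ) + γ * βP / (1 - γ) ^ 2 := by
    have h8 : M ≤ βR + γ * M + γ * (βP / (1 - γ)) := hpt p0.1 p0.2
    have h9 : βR / (1 - γ) + γ * βP / (1 - γ) ^ 2
        = (βR * (1 - γ) + γ * βP) / (1 - γ) ^ 2 := by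
      field_simp
    rw [h9, le_div_iff₀ (by positivity)]
    have h10 : γ * (βP / (1 - γ)) * (1 - γ) = γ * βP := by field_simp
    nlinarith [mul_le_mul_of_nonneg_right h8 hc.le]
  refine ciSup_le fun p => ?_
  exact (hp0 p).trans hMle

end MDPGroup
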